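/- arXiv:2212.03312 — 4 statements merged into one kernel-verified Lean document; each statement's English description precedes it below -/
import Mathlib

section
/- For n ≥ 1, ∑_{w∈S_n} w·(∏_{1≤i<j≤n} (x_i - t x_j)/(x_i - x_j)) = ∏_{d=1}^{n} (1-t^d)/(1-t), where S_n acts by permuting the variables x_1,…,x_n. -/
/-!
Write `w ∈ S_{n+1}` as the value `k = w 0` together with a permutation of the remaining
`n` points. The pairs `(0, j)` contribute `∏_{b ≠ k} (x_k - t x_b) / (x_k - x_b)`, and the
other pairs give the same symmetrized product in `n` variables, so by induction it suffices
to show `(1 - t) ∑_k ∏_{i ≠ k} (x_k - t x_i) / (x_k - x_i) = 1 - t^n`. When every `x_i` is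
nonzero this is Lagrange interpolation at `0` of `∏ (X - t x_i) - ∏ (X - x_i)`, a polynomial
of degree `< n` whose value at `x_k` is `(1 - t) x_k ∏_{i ≠ k} (x_k - t x_i)`. If some
`x_m = 0`, its own term is `t^{n-1}` and it contributes a factor `1` to every other term,
which reduces the identity to `n - 1` variables.
-/

open Finset

theorem prod_filter_lt_eq_prod_prod_Ioi {α M : Type*} [CommMonoid M] [Fintype α] [LinearOrder α]
    [LocallyFiniteOrderTop α] (f : α → α → M) :
    ∏ p ∈ univ.filter (fun p : α × α => p.1 < p.2), f p.1 p.2 = ∏ i, ∏ j ∈ Ioi i, f i j := by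
  rw [prod_filter, Fintype.prod_prod_type]
  simp_rw [← filter_lt_eq_Ioi, prod_filter]

theorem prod_swap_zero_succ {M : Type*} [CommMonoid M] {n : ℕ} (k : Fin (n + 1))
    (f : Fin (n + 1) → M) : ∏ j : Fin n, f (Equiv.swap 0 k j.succ) = ∏ b ∈ univ.erase k, f b := by
  rw [← Fin.prod_Ioi_zero (fun b => f (Equiv.swap 0 k b))]
  refine prod_equiv (Equiv.swap 0 k) (fun b => ?_) (fun _ _ => rfl)
  simp [Equiv.swap_apply_eq_iff]

section

open Polynomial

variable {F : Type*} [Field F]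

theorem one_sub_mul_sum_prod_eq_of_ne_zero {ι : Type*} [DecidableEq ι] {s : Finset ι}
    {x : ι → F} (hx : Set.InjOn x s) (hx0 : ∀ i ∈ s, x i ≠ 0) (t : F) :
    (1 - t) * ∑ k ∈ s, ∏ i ∈ s.erase k, (x k - t * x i) / (x k - x i) = 1 - t ^ #s := by
  set f : F[X] := Lagrange.nodal s (fun i => t * x i) - Lagrange.nodal s x
  have hf : f.degree < #s := by
    refine (degree_sub_lt_left ?_ (Lagrange.nodal_monic).ne_zero ?_).trans_eq ?_ <;>
      simp [Lagrange.degree_nodal, Lagrange.nodal_monic]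
  have hQ : (Lagrange.nodal s x).eval 0 ≠ 0 := by
    rw [Lagrange.eval_nodal]
    exact prod_ne_zero_iff.mpr fun i hi => by simpa using hx0 i hi
  have hterm : ∀ k ∈ s, Lagrange.nodalWeight s x k * (0 - x k)⁻¹ * f.eval (x k)
      = -((1 - t) * ∏ i ∈ s.erase k, (x k - t * x i) / (x k - x i)) := by
    intro k hk
    have hxk := hx0 k hk
    rw [eval_sub, Lagrange.eval_nodal_at_node hk, sub_zero, Lagrange.eval_nodal,
      ← mul_prod_erase _ _ hk, Lagrange.nodalWeight, prod_div_distrib, prod_inv_distrib]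
    field_simp
    ring
  have hlag := Lagrange.eval_interpolate_not_at_node (fun i => f.eval (x i)) (x := 0)
    (fun i hi => (hx0 i hi).symm)
  rw [← Lagrange.eq_interpolate hx hf, sum_congr rfl hterm, sum_neg_distrib, ← mul_sum] at hlag
  have hf0 : f.eval 0 = (t ^ #s - 1) * (Lagrange.nodal s x).eval 0 := by
    simp only [f, eval_sub, Lagrange.eval_nodal, zero_sub, ← mul_neg, prod_mul_distrib, prod_const]
    ring
  rw [hf0] at hlag
  apply mul_right_cancel₀ hQ
  linear_combination hlag

theorem one_sub_mul_sum_prod_eq {ι : Type*} [DecidableEq ι] (s : Finset ι) {x : ι → F}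
    (hx : Set.InjOn x s) (t : F) :
    (1 - t) * ∑ k ∈ s, ∏ i ∈ s.erase k, (x k - t * x i) / (x k - x i) = 1 - t ^ #s := by
  induction s using Finset.strongInduction with
  | H s ih =>
  by_cases hx0 : ∀ i ∈ s, x i ≠ 0
  · exact one_sub_mul_sum_prod_eq_of_ne_zero hx hx0 t
  push Not at hx0
  obtain ⟨m, hm, hxm⟩ := hx0
  have hne : ∀ i ∈ s.erase m, x i ≠ 0 := fun i hi h =>
    (mem_erase.mp hi).1 (hx (mem_erase.mp hi).2 hm (h.trans hxm.symm))
  have hterm_m : ∏ i ∈ s.erase m, (x m - t * x i) / (x m - x i) = t ^ (#s - 1) := by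
    rw [← card_erase_of_mem hm, ← prod_const]
    refine prod_congr rfl fun i hi => ?_
    rw [hxm]
    field_simp [hne i hi]
    ring
  have hterm : ∀ k ∈ s.erase m, ∏ i ∈ s.erase k, (x k - t * x i) / (x k - x i)
      = ∏ i ∈ (s.erase m).erase k, (x k - t * x i) / (x k - x i) := by
    intro k hk
    have hmk : m ∈ s.erase k := mem_erase.mpr ⟨fun h => (mem_erase.mp hk).1 h.symm, hm⟩
    rw [← mul_prod_erase _ _ hmk, erase_right_comm, hxm, mul_zero, sub_zero,
      div_self (hne k hk), one_mul]
  obtain ⟨n, hcard⟩ : ∃ n, #s = n + 1 := Nat.exists_eq_add_one.mpr (card_pos.mpr ⟨m, hm⟩)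
  have hrest := ih _ (erase_ssubset hm) (hx.mono (erase_subset m s))
  rw [← add_sum_erase s _ hm, hterm_m, sum_congr rfl hterm, mul_add, hrest,
    card_erase_of_mem hm, hcard, Nat.add_sub_cancel]
  ring

def cFunction {n : ℕ} (t : F) (x : Fin n → F) : F :=
  ∏ i, ∏ j ∈ Ioi i, (x i - t * x j) / (x i - x j)

theorem cFunction_succ {n : ℕ} (t : F) (x : Fin (n + 1) → F) :
    cFunction t x = (∏ j : Fin n, (x 0 - t * x j.succ) / (x 0 - x j.succ)) *
      cFunction t (x ∘ Fin.succ) := by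
  simp only [cFunction, Fin.prod_univ_succ, Fin.prod_Ioi_zero, Fin.prod_Ioi_succ,
    Function.comp_apply]

theorem cFunction_comp_decomposeFin_symm {n : ℕ} (t : F) (x : Fin (n + 1) → F)
    (k : Fin (n + 1)) (e : Equiv.Perm (Fin n)) :
    cFunction t (x ∘ Equiv.Perm.decomposeFin.symm (k, e)) =
      (∏ b ∈ univ.erase k, (x k - t * x b) / (x k - x b)) *
        cFunction t ((x ∘ Equiv.swap 0 k ∘ Fin.succ) ∘ e) := by
  rw [cFunction_succ]
  simp only [Function.comp_def, Equiv.Perm.decomposeFin_symm_apply_zero,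
    Equiv.Perm.decomposeFin_symm_apply_succ]
  congr 1
  exact (Equiv.prod_comp e fun j : Fin n =>
      (x k - t * x (Equiv.swap 0 k j.succ)) / (x k - x (Equiv.swap 0 k j.succ))).trans
    (prod_swap_zero_succ k fun b => (x k - t * x b) / (x k - x b))

theorem sum_cFunction_comp_perm {t : F} (ht : 1 - t ≠ 0) {n : ℕ} (x : Fin n → F)
    (hx : Function.Injective x) :
    ∑ w : Equiv.Perm (Fin n), cFunction t (x ∘ w) = ∏ d ∈ Icc 1 n, (1 - t ^ d) / (1 - t) := by
  induction n with
  | zero => simp [cFunction]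
  | succ n ih =>
    have hsum : ∑ k, ∏ b ∈ univ.erase k, (x k - t * x b) / (x k - x b)
        = (1 - t ^ (n + 1)) / (1 - t) := by
      rw [eq_div_iff ht, mul_comm, one_sub_mul_sum_prod_eq univ hx.injOn, card_univ,
        Fintype.card_fin]
    calc ∑ w : Equiv.Perm (Fin (n + 1)), cFunction t (x ∘ w)
        = ∑ k, ∑ e, cFunction t (x ∘ Equiv.Perm.decomposeFin.symm (k, e)) := by
          rw [← Equiv.Perm.decomposeFin.symm.sum_comp, Fintype.sum_prod_type]
      _ = ∑ k, (∏ b ∈ univ.erase k, (x k - t * x b) / (x k - x b)) *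
            ∏ d ∈ Icc 1 n, (1 - t ^ d) / (1 - t) := by
          refine sum_congr rfl fun k _ => ?_
          simp only [cFunction_comp_decomposeFin_symm, ← mul_sum]
          rw [ih _ (hx.comp ((Equiv.swap 0 k).injective.comp (Fin.succ_injective n)))]
      _ = ∏ d ∈ Icc 1 (n + 1), (1 - t ^ d) / (1 - t) := by
          rw [← sum_mul, hsum, prod_Icc_succ_top (Nat.le_add_left 1 n), mul_comm]

end

theorem symmetrized_c_function_eq_t_factorial_general (n : ℕ)
    (F : Type*) [Field F] (t : F) (x : Fin n → F) (hx : Function.Injective x)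
    (ht : ∀ d : ℕ, 1 ≤ d → (1 : F) - t ^ d ≠ 0) :
    ∑ w : Equiv.Perm (Fin n),
        ∏ p ∈ (Finset.univ.filter fun p : Fin n × Fin n => p.1 < p.2),
          (x (w p.1) - t * x (w p.2)) / (x (w p.1) - x (w p.2))
      = ∏ d ∈ Finset.Icc 1 n, (1 - t ^ d) / (1 - t) := by
  rw [← sum_cFunction_comp_perm (by simpa using ht 1 le_rfl) x hx]
  exact sum_congr rfl fun w _ =>
    prod_filter_lt_eq_prod_prod_Ioi fun i j => (x (w i) - t * x (w j)) / (x (w i) - x (w j))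

/-- For `n ≥ 1`,
`∑_{w ∈ S_n} w·(∏_{1≤i<j≤n} (x_i - t x_j)/(x_i - x_j)) = ∏_{d=1}^n (1-t^d)/(1-t)`,
where `S_n` permutes the variables.  The identity of rational functions is encoded by
taking the `x_i` to be distinct elements of a field and `t` generic. -/
theorem symmetrized_c_function_eq_t_factorial (n : ℕ) (hn : 1 ≤ n)
    (F : Type*) [Field F] (t : F) (x : Fin n → F) (hx : Function.Injective x)
    (ht : ∀ d : ℕ, 1 ≤ d → (1 : F) - t ^ d ≠ 0) :
    ∑ w : Equiv.Perm (Fin n),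
        ∏ p ∈ (Finset.univ.filter fun p : Fin n × Fin n => p.1 < p.2),
          (x (w p.1) - t * x (w p.2)) / (x (w p.1) - x (w p.2))
      = ∏ d ∈ Finset.Icc 1 n, (1 - t ^ d) / (1 - t) :=
  symmetrized_c_function_eq_t_factorial_general n F t x hx ht
end

section
/- For a partition λ with at most n parts, t^{n(λ)} ∏_{1≤i<j≤n} (1-t^{λ_i-λ_j+j-i})/(1-t^{j-i}) = t^{n(λ)} ∏_{b∈λ} (1-t^{n+c(b)})/(1-t^{h(b)}), i.e. the root-product form of the principal specialization of s_λ equals its hook-content form, where h(b) is the hook length and c(b) the content of box b. -/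
/-!
Write `l_i = λ_i + n - 1 - i`, a strictly decreasing sequence. In row `r`, the hook lengths
together with the differences `l_r - l_j` for `j > r` are exactly the numbers `1, …, l_r`.
Hence, with `[N]! = ∏_{k=1}^N (1 - t^k)` and `m = n - 1 - r`, the factors of
both sides that belong to row `r` equal `[l_r]! / ([m]! · ∏_{c} (1 - t^{h(r,c)}))`.
-/

open Finset

/-- `λ'_c`, the length of column `c` of the partition `λ`. -/
def conjPart {n : ℕ} (lam : Fin n → ℕ) (c : ℕ) : ℕ :=
  (Finset.univ.filter fun j : Fin n => c ≤ lam j).card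

theorem Fin.prod_Ioi_val_sub {M : Type*} [CommMonoid M] {n : ℕ} (r : Fin n) (f : ℕ → M) :
    ∏ j ∈ Ioi r, f (j - r) = ∏ k ∈ Icc 1 (n - 1 - r), f k := by
  have hIoo : Ioo (r : ℕ) n = (Icc 1 (n - 1 - r)).map (addRightEmbedding (r : ℕ)) := by
    ext x
    simp only [mem_Ioo, map_add_right_Icc, mem_Icc]
    omega
  calc ∏ j ∈ Ioi r, f (j - r) = ∏ x ∈ Ioo (r : ℕ) n, f (x - r) := by
        rw [← Fin.map_valEmbedding_Ioi, prod_map]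
        rfl
    _ = ∏ k ∈ Icc 1 (n - 1 - r), f k := by
        rw [hIoo, prod_map]
        simp

theorem prod_Icc_one_mul_prod_Icc_add {M : Type*} [CommMonoid M] (f : ℕ → M) (m L : ℕ) :
    (∏ k ∈ Icc 1 m, f k) * ∏ c ∈ Icc 1 L, f (c + m) = ∏ k ∈ Icc 1 (L + m), f k := by
  induction L with
  | zero => simp
  | succ L ih =>
    rw [prod_Icc_succ_top (by omega), ← mul_assoc, ih, add_right_comm,
      prod_Icc_succ_top (by omega)]

theorem prod_filter_fst_lt_snd {α M : Type*} [Fintype α] [LinearOrder α]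
    [LocallyFiniteOrderTop α] [CommMonoid M] (f : α → α → M) :
    ∏ p ∈ univ.filter (fun p : α × α => p.1 < p.2), f p.1 p.2 = ∏ i, ∏ j ∈ Ioi i, f i j := by
  rw [prod_filter, Fintype.prod_prod_type]
  refine prod_congr rfl fun i _ => ?_
  rw [← prod_filter, filter_lt_eq_Ioi]

section Partition

variable {n : ℕ} {lam : Fin n → ℕ}

theorem lt_conjPart_iff (hlam : Antitone lam) (r : Fin n) (c : ℕ) :
    (r : ℕ) < conjPart lam c ↔ c ≤ lam r := by
  constructor
  · intro h
    by_contra! hc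
    have hsub : univ.filter (fun j : Fin n => c ≤ lam j) ⊆ Iio r := fun j hj =>
      mem_Iio.2 <| lt_of_not_ge fun hrj => ((mem_filter.1 hj).2.trans (hlam hrj)).not_gt hc
    have := card_le_card hsub
    rw [Fin.card_Iio] at this
    exact this.not_gt h
  · intro h
    have hsub : Iic r ⊆ univ.filter (fun j : Fin n => c ≤ lam j) := fun j hj =>
      mem_filter.2 ⟨mem_univ j, h.trans (hlam (mem_Iic.1 hj))⟩
    have := card_le_card hsub
    rw [Fin.card_Iic] at this
    exact this

theorem conjPart_antitone (lam : Fin n → ℕ) : Antitone (conjPart lam) := fun _ _ h =>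
  card_le_card fun _ => by
    simp only [mem_filter, mem_univ, true_and]
    exact h.trans

theorem conjPart_le (lam : Fin n → ℕ) (c : ℕ) : conjPart lam c ≤ n :=
  (card_filter_le _ _).trans_eq (card_fin n)

/-- The hook length of the box in row `r` (counted from `0`) and column `c` (counted from `1`). -/
def hookLength (lam : Fin n → ℕ) (r : Fin n) (c : ℕ) : ℕ :=
  (lam r - c) + (conjPart lam c - ((r : ℕ) + 1)) + 1

/-- `l_i - l_j` for `l_i = λ_i + n - 1 - i`, when `i ≤ j`. -/
def shiftedDiff (lam : Fin n → ℕ) (i j : Fin n) : ℕ :=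
  (lam i - lam j) + ((j : ℕ) - (i : ℕ))

theorem hookLength_strictAntiOn (hlam : Antitone lam) (r : Fin n) :
    StrictAntiOn (hookLength lam r) (Icc 1 (lam r) : Set ℕ) := by
  intro c hc c' hc' hlt
  simp only [coe_Icc, Set.mem_Icc] at hc hc'
  have hr := (lt_conjPart_iff hlam r c').2 hc'.2
  have := conjPart_antitone lam hlt.le
  unfold hookLength
  omega

theorem shiftedDiff_strictMonoOn (hlam : Antitone lam) (r : Fin n) :
    StrictMonoOn (shiftedDiff lam r) (Ioi r : Set (Fin n)) := by
  intro j hj j' hj' hlt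
  simp only [coe_Ioi, Set.mem_Ioi] at hj hj'
  have h₁ := hlam hj.le
  have h₂ := hlam hlt.le
  have : (j : ℕ) < j' := hlt
  unfold shiftedDiff
  omega

theorem hookLength_ne_shiftedDiff (hlam : Antitone lam) {r j : Fin n} (hrj : r < j) {c : ℕ}
    (hc : c ≤ lam r) : hookLength lam r c ≠ shiftedDiff lam r j := by
  have hr := (lt_conjPart_iff hlam r c).2 hc
  have hjr := hlam hrj.le
  have : (r : ℕ) < j := hrj
  unfold hookLength shiftedDiff
  -- split on whether the box `(j, c)` lies in `λ`
  rcases le_or_gt c (lam j) with hcj | hcj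
  · have := (lt_conjPart_iff hlam j c).2 hcj
    omega
  · have := (lt_conjPart_iff hlam j c).not.2 hcj.not_ge
    omega

theorem disjoint_image_hookLength_image_shiftedDiff (hlam : Antitone lam) (r : Fin n) :
    Disjoint ((Icc 1 (lam r)).image (hookLength lam r)) ((Ioi r).image (shiftedDiff lam r)) := by
  simp only [disjoint_left, mem_image, mem_Icc, mem_Ioi, not_exists, not_and]
  rintro _ ⟨c, hc, rfl⟩ j hrj
  exact (hookLength_ne_shiftedDiff hlam hrj hc.2).symm

theorem image_hookLength_union_image_shiftedDiff (hlam : Antitone lam) (r : Fin n) :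
    (Icc 1 (lam r)).image (hookLength lam r) ∪ (Ioi r).image (shiftedDiff lam r)
      = Icc 1 (lam r + (n - 1 - r)) := by
  have hr : (r : ℕ) < n := r.isLt
  refine eq_of_subset_of_card_le (union_subset ?_ ?_) ?_
  · refine image_subset_iff.2 fun c hc => ?_
    rw [mem_Icc] at hc ⊢
    have := (lt_conjPart_iff hlam r c).2 hc.2
    have := conjPart_le lam c
    unfold hookLength
    omega
  · refine image_subset_iff.2 fun j hj => ?_
    have hrj : r < j := mem_Ioi.1 hj
    have := hlam hrj.le
    have : (r : ℕ) < j := hrj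
    have := j.isLt
    rw [mem_Icc]
    unfold shiftedDiff
    omega
  · rw [card_union_of_disjoint (disjoint_image_hookLength_image_shiftedDiff hlam r),
      card_image_of_injOn (hookLength_strictAntiOn hlam r).injOn,
      card_image_of_injOn (shiftedDiff_strictMonoOn hlam r).injOn, Nat.card_Icc, Nat.card_Icc,
      Fin.card_Ioi]
    omega

theorem prod_hookLength_mul_prod_shiftedDiff {M : Type*} [CommMonoid M] (hlam : Antitone lam)
    (r : Fin n) (f : ℕ → M) :
    (∏ c ∈ Icc 1 (lam r), f (hookLength lam r c)) * ∏ j ∈ Ioi r, f (shiftedDiff lam r j)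
      = ∏ k ∈ Icc 1 (lam r + (n - 1 - r)), f k := by
  rw [← image_hookLength_union_image_shiftedDiff hlam r,
    prod_union (disjoint_image_hookLength_image_shiftedDiff hlam r),
    prod_image (hookLength_strictAntiOn hlam r).injOn,
    prod_image (shiftedDiff_strictMonoOn hlam r).injOn]

theorem prod_shiftedDiff_div_eq_prod_hookLength_div {F : Type*} [Field F] {t : F}
    (ht : ∀ d : ℕ, 1 ≤ d → (1 : F) - t ^ d ≠ 0) (hlam : Antitone lam) (r : Fin n) :
    ∏ j ∈ Ioi r, (1 - t ^ shiftedDiff lam r j) / (1 - t ^ ((j : ℕ) - r))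
      = ∏ c ∈ Icc 1 (lam r), (1 - t ^ (n + (c - 1) - r)) / (1 - t ^ hookLength lam r c) := by
  have hr : (r : ℕ) < n := r.isLt
  have hcontent : ∏ c ∈ Icc 1 (lam r), (1 - t ^ (n + (c - 1) - r))
      = ∏ c ∈ Icc 1 (lam r), (1 - t ^ (c + (n - 1 - r))) :=
    prod_congr rfl fun c hc => by rw [mem_Icc] at hc; congr 2; omega
  have hden₁ : ∏ j ∈ Ioi r, (1 - t ^ ((j : ℕ) - r)) ≠ 0 :=
    prod_ne_zero_iff.2 fun j hj => ht _ (Nat.sub_pos_of_lt (Fin.lt_def.1 (mem_Ioi.1 hj)))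
  have hden₂ : ∏ c ∈ Icc 1 (lam r), (1 - t ^ hookLength lam r c) ≠ 0 :=
    prod_ne_zero_iff.2 fun c _ => ht _ (Nat.le_add_left _ _)
  rw [prod_div_distrib, prod_div_distrib, div_eq_div_iff hden₁ hden₂, mul_comm,
    prod_hookLength_mul_prod_shiftedDiff hlam r (fun k => 1 - t ^ k), hcontent,
    Fin.prod_Ioi_val_sub r (fun k => 1 - t ^ k), mul_comm,
    prod_Icc_one_mul_prod_Icc_add (fun k => 1 - t ^ k)]

end Partition

/-- Root-product form equals hook-content form for the principal specialization of `s_λ`: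
`t^{n(λ)} ∏_{i<j} (1-t^{λ_i-λ_j+j-i})/(1-t^{j-i})
  = t^{n(λ)} ∏_{b∈λ} (1-t^{n+c(b)})/(1-t^{h(b)})`,
where for a box `b = (r,c)` (with `r` indexed from `0` and `1 ≤ c ≤ λ_r`),
`h(b) = (λ_r - c) + (λ'_c - (r+1)) + 1` and `n + c(b) = n + (c-1) - r`; `t` generic. -/
theorem root_product_eq_hook_content (n : ℕ) (F : Type*) [Field F] (t : F)
    (ht : ∀ d : ℕ, 1 ≤ d → (1 : F) - t ^ d ≠ 0)
    (lam : Fin n → ℕ) (hlam : Antitone lam) :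
    t ^ (∑ i : Fin n, (i : ℕ) * lam i) *
      ∏ p ∈ (Finset.univ.filter fun p : Fin n × Fin n => p.1 < p.2),
        (1 - t ^ ((lam p.1 - lam p.2) + ((p.2 : ℕ) - (p.1 : ℕ)))) /
          (1 - t ^ ((p.2 : ℕ) - (p.1 : ℕ)))
    = t ^ (∑ i : Fin n, (i : ℕ) * lam i) *
        ∏ r : Fin n, ∏ c ∈ Finset.Icc 1 (lam r),
          (1 - t ^ (n + (c - 1) - (r : ℕ))) /
            (1 - t ^ ((lam r - c) + (conjPart lam c - ((r : ℕ) + 1)) + 1)) := by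
  congr 1
  exact (prod_filter_fst_lt_snd fun i j =>
      (1 - t ^ shiftedDiff lam i j) / (1 - t ^ ((j : ℕ) - i))).trans
    (prod_congr rfl fun r _ => prod_shiftedDiff_div_eq_prod_hookLength_div ht hlam r)
end

section
/- Let λ = (λ_1 ≥ ⋯ ≥ λ_n ≥ 0) be a partition with at most n parts. Then ∏_{1≤i<j≤n} ∏_{ℓ=0}^{λ_i-λ_j-1} (1-q^ℓ t^{j-i+1})/(1-q^ℓ t^{j-i}) = ∏_{b∈λ} (1-q^{coarm(b)} t^{n-coleg(b)})/(1-q^{arm(b)} t^{leg(b)+1}), as rational functions in q and t. -/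
/-!
Induct on the number `n` of parts. Appending a part `λ_n ≤ λ_{n-1}` adds a last row whose hook
factors cancel: the numerator `1 - q^{c-1} t` of column `c` is the denominator of column
`λ_n + 1 - c`. In an earlier row `r` it raises by one the exponent `n - r` of every numerator
and the leg of every box in the first `λ_n` columns (where `leg + 1 = n - r`); the row factor
thereby gains exactly the root factor of the pair `(r, n)`.
-/

open Finset

section Reindexing
variable {M : Type*} [CommMonoid M]

theorem Finset.prod_Icc_one_sub_one (f : ℕ → M) (a : ℕ) :
    ∏ c ∈ Icc 1 a, f (c - 1) = ∏ l ∈ range a, f l := by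
  rw [← Ico_add_one_right_eq_Icc, prod_Ico_eq_prod_range]
  simp

theorem Finset.prod_range_mul_prod_Icc_one_sub (f : ℕ → M) {a b : ℕ} (hb : b ≤ a) :
    (∏ l ∈ range (a - b), f l) * ∏ c ∈ Icc 1 b, f (a - c) = ∏ l ∈ range a, f l := by
  rw [← Ico_add_one_right_eq_Icc, prod_Ico_reflect f 1 (by omega), Nat.add_sub_add_right,
    Nat.add_sub_cancel, prod_range_mul_prod_Ico f (Nat.sub_le a b)]

theorem Finset.prod_Icc_one_sub (f : ℕ → M) (a : ℕ) :
    ∏ c ∈ Icc 1 a, f (a - c) = ∏ l ∈ range a, f l := by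
  simpa using prod_range_mul_prod_Icc_one_sub f le_rfl

theorem Finset.prod_filter_fin_lt_eq_prod_range (n : ℕ) (G : ℕ → ℕ → M) :
    ∏ p ∈ univ.filter (fun p : Fin n × Fin n => p.1 < p.2), G p.1 p.2
      = ∏ j ∈ range n, ∏ i ∈ range j, G i j := by
  rw [prod_filter, Fintype.prod_prod_type]
  simp only [Fin.lt_def]
  rw [Fin.prod_univ_eq_prod_range (fun i => ∏ j : Fin n, if i < j then G i j else 1)]
  simp only [fun i : ℕ => Fin.prod_univ_eq_prod_range (fun j => if i < j then G i j else 1) n]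
  rw [prod_comm]
  refine prod_congr rfl fun j hj => ?_
  rw [← prod_filter]
  congr 1
  ext i
  simp only [mem_filter, mem_range] at hj ⊢
  omega

end Reindexing

-- How one row changes when a part `b` is appended: the columns `c ≤ b` trade the hook
-- factor `v (a - c)` for `u (a - c)`.
theorem Finset.prod_Icc_div_ite_eq_mul {G : Type*} [CommGroupWithZero G] (u v e : ℕ → G)
    {a b : ℕ} (hb : b ≤ a) (hu : ∀ l < a, u l ≠ 0) (hv : ∀ l < a, v l ≠ 0)
    (he : ∀ c ∈ Icc 1 b, e c = v (a - c)) :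
    ∏ c ∈ Icc 1 a, u (c - 1) / (if c ≤ b then u (a - c) else e c)
      = (∏ l ∈ range (a - b), u l / v l) * ∏ c ∈ Icc 1 a, v (c - 1) / e c := by
  have split_head (f : ℕ → G) : ∏ c ∈ Icc 1 a, (if c ≤ b then f (a - c) else e c)
      = (∏ c ∈ Icc 1 b, f (a - c)) * ∏ c ∈ Icc 1 a with ¬ c ≤ b, e c := by
    rw [prod_ite]
    congr 2
    ext c
    simp only [mem_filter, mem_Icc]
    omega
  have e_prod_eq : ∏ c ∈ Icc 1 a, e c = ∏ c ∈ Icc 1 a, (if c ≤ b then v (a - c) else e c) :=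
    prod_congr rfl fun c hc => by
      split_ifs with hcb
      · exact he c (mem_Icc.2 ⟨(mem_Icc.1 hc).1, hcb⟩)
      · rfl
  have head_ne (f : ℕ → G) (hf : ∀ l < a, f l ≠ 0) : ∏ c ∈ Icc 1 b, f (a - c) ≠ 0 :=
    prod_ne_zero_iff.2 fun c hc => hf _ (by grind)
  have hU := head_ne u hu
  have hV := head_ne v hv
  have hV' : ∏ l ∈ range (a - b), v l ≠ 0 :=
    prod_ne_zero_iff.2 fun l hl => hv l (by grind)
  rw [prod_div_distrib, prod_div_distrib, prod_div_distrib, prod_Icc_one_sub_one,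
    prod_Icc_one_sub_one, e_prod_eq, split_head, split_head, ← prod_range_mul_prod_Icc_one_sub u hb,
    ← prod_range_mul_prod_Icc_one_sub v hb]
  field_simp

theorem conjPart_eq_of_forall_le {n : ℕ} {lam : Fin n → ℕ} {c : ℕ} (hc : ∀ j, c ≤ lam j) :
    conjPart lam c = n := by
  simp [conjPart, filter_true_of_mem fun j _ => hc j]

theorem conjPart_succ (L : ℕ → ℕ) (n c : ℕ) :
    conjPart (fun i : Fin (n + 1) => L i) c
      = conjPart (fun i : Fin n => L i) c + if c ≤ L n then 1 else 0 := by
  simp only [conjPart, card_filter, Fin.sum_univ_castSucc, Fin.val_castSucc, Fin.val_last]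

section Hooks
variable {F : Type*} [Field F] (q t : F)

def rootFactor (L : ℕ → ℕ) (i j : ℕ) : F :=
  ∏ l ∈ range (L i - L j), (1 - q ^ l * t ^ (j - i + 1)) / (1 - q ^ l * t ^ (j - i))

def hookRow (L : ℕ → ℕ) (n r : ℕ) : F :=
  ∏ c ∈ Icc 1 (L r), (1 - q ^ (c - 1) * t ^ (n - r)) /
    (1 - q ^ (L r - c) * t ^ (conjPart (fun i : Fin n => L i) c - r))

variable {q t}

theorem hookRow_self (h : ∀ a b : ℕ, 1 ≤ b → (1 : F) - q ^ a * t ^ b ≠ 0) {L : ℕ → ℕ} {n : ℕ}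
    (hL : AntitoneOn L (Set.Iio (n + 1))) :
    hookRow q t L (n + 1) n = 1 := by
  have hcol (c) (hc : c ∈ Icc 1 (L n)) : conjPart (fun i : Fin (n + 1) => L i) c = n + 1 :=
    conjPart_eq_of_forall_le fun j => (mem_Icc.1 hc).2.trans <|
      hL j.isLt (Nat.lt_succ_self n) (Nat.le_of_lt_succ j.isLt)
  rw [hookRow, prod_congr rfl fun c hc => by rw [hcol c hc, Nat.add_sub_cancel_left, pow_one],
    prod_div_distrib, prod_Icc_one_sub_one (fun l => 1 - q ^ l * t),
    prod_Icc_one_sub (fun l => 1 - q ^ l * t)]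
  exact div_self <| prod_ne_zero_iff.2 fun l _ => by simpa using h l 1 le_rfl

theorem hookRow_succ (h : ∀ a b : ℕ, 1 ≤ b → (1 : F) - q ^ a * t ^ b ≠ 0) {L : ℕ → ℕ}
    {n r : ℕ} (hL : AntitoneOn L (Set.Iio (n + 1))) (hr : r < n) :
    hookRow q t L (n + 1) r = rootFactor q t L r n * hookRow q t L n r := by
  have hfull (c) (hc : c ≤ L n) : conjPart (fun i : Fin n => L i) c = n :=
    conjPart_eq_of_forall_le fun j => hc.trans <| hL (by simp) (Nat.lt_succ_self n) j.isLt.le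
  have hcol (c) : conjPart (fun i : Fin (n + 1) => L i) c - r
      = if c ≤ L n then n - r + 1 else conjPart (fun i : Fin n => L i) c - r := by
    rw [conjPart_succ]
    split_ifs with hc
    · rw [hfull c hc]
      omega
    · rfl
  calc hookRow q t L (n + 1) r
      = ∏ c ∈ Icc 1 (L r), (1 - q ^ (c - 1) * t ^ (n - r + 1)) /
          (if c ≤ L n then 1 - q ^ (L r - c) * t ^ (n - r + 1) else
            1 - q ^ (L r - c) * t ^ (conjPart (fun i : Fin n => L i) c - r)) := by
        refine prod_congr rfl fun c _ => ?_
        rw [hcol, show n + 1 - r = n - r + 1 by omega]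
        split_ifs <;> rfl
    _ = _ := prod_Icc_div_ite_eq_mul (fun l => 1 - q ^ l * t ^ (n - r + 1))
          (fun l => 1 - q ^ l * t ^ (n - r)) _ (hL (by simp; omega) (by simp) hr.le)
          (fun l _ => h l _ (by omega)) (fun l _ => h l _ (by omega))
          fun c hc => by rw [hfull c (mem_Icc.1 hc).2]

theorem prod_rootFactor_eq_prod_hookRow (h : ∀ a b : ℕ, 1 ≤ b → (1 : F) - q ^ a * t ^ b ≠ 0)
    {L : ℕ → ℕ} {n : ℕ} (hL : AntitoneOn L (Set.Iio n)) :
    ∏ j ∈ range n, ∏ i ∈ range j, rootFactor q t L i j = ∏ r ∈ range n, hookRow q t L n r := by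
  induction n with
  | zero => simp
  | succ n ih =>
    rw [prod_range_succ, prod_range_succ (hookRow q t L (n + 1)), hookRow_self h hL, mul_one,
      ih (hL.mono (Set.Iio_subset_Iio n.le_succ)),
      prod_congr rfl fun r hr => hookRow_succ h hL (mem_range.1 hr), prod_mul_distrib, mul_comm]

end Hooks

/-- Rational functions in `q, t` are modelled by elements of a field in which
`1 - q^a t^b ≠ 0` whenever `b ≥ 1`. Rows are indexed from `0`, so the box `(r, c)` has
`coleg = r` and `leg + 1 = λ'_c - r`. -/
theorem macdonald_principal_specialization_hook_form (n : ℕ)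
    (F : Type*) [Field F] (q t : F)
    (h : ∀ a b : ℕ, 1 ≤ b → (1 : F) - q ^ a * t ^ b ≠ 0)
    (lam : Fin n → ℕ) (hlam : Antitone lam) :
    ∏ p ∈ (Finset.univ.filter fun p : Fin n × Fin n => p.1 < p.2),
      ∏ l ∈ Finset.range (lam p.1 - lam p.2),
        (1 - q ^ l * t ^ (((p.2 : ℕ) - (p.1 : ℕ)) + 1)) /
          (1 - q ^ l * t ^ ((p.2 : ℕ) - (p.1 : ℕ)))
    = ∏ r : Fin n, ∏ c ∈ Finset.Icc 1 (lam r),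
        (1 - q ^ (c - 1) * t ^ (n - (r : ℕ))) /
          (1 - q ^ (lam r - c) * t ^ (conjPart lam c - (r : ℕ))) := by
  obtain ⟨L, rfl⟩ : ∃ L : ℕ → ℕ, lam = fun i : Fin n => L i :=
    ⟨fun i => if hi : i < n then lam ⟨i, hi⟩ else 0, funext fun i => by simp⟩
  have hL : AntitoneOn L (Set.Iio n) := fun i hi j hj hij =>
    hlam (show (⟨i, hi⟩ : Fin n) ≤ ⟨j, hj⟩ from hij)
  calc _ = ∏ p ∈ univ.filter (fun p : Fin n × Fin n => p.1 < p.2), rootFactor q t L p.1 p.2 := rfl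
    _ = ∏ r : Fin n, hookRow q t L n r := by
      rw [prod_filter_fin_lt_eq_prod_range, Fin.prod_univ_eq_prod_range (hookRow q t L n),
        prod_rootFactor_eq_prod_hookRow h hL]
end

section
/- Define operators on ℂ(t^{1/2})[x_1^{±1},…,x_n^{±1}] by T_i f = -t^{-1/2} f + (1+s_i)((t^{-1/2} - t^{1/2} x_i^{-1}x_{i+1})/(1 - x_i^{-1}x_{i+1})) f, for i = 1,…,n-1, where s_i swaps x_i and x_{i+1}. Then the T_i satisfy the Hecke algebra relations: T_i^2 = (t^{1/2} - t^{-1/2}) T_i + 1, T_i T_{i+1} T_i = T_{i+1} T_i T_{i+1}, and T_i T_j = T_j T_i for |i-j| ≥ 2. -/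
noncomputable section

open MvPolynomial

/-- The field of rational functions `ℂ(t^{1/2})(x_1,…,x_n)` (with rational coefficient
field; `t^{1/2}` is the generator of `RatFunc ℚ`). -/
abbrev KK (n : ℕ) := FractionRing (MvPolynomial (Fin n) (RatFunc ℚ))

/-- The element `t^{1/2}`. -/
def tHalf (n : ℕ) : KK n :=
  algebraMap (MvPolynomial (Fin n) (RatFunc ℚ)) (KK n) (C RatFunc.X)

/-- The variable `x_i`. -/
def xv {n : ℕ} (i : Fin n) : KK n :=
  algebraMap (MvPolynomial (Fin n) (RatFunc ℚ)) (KK n) (X i)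

/-- The action of `w ∈ S_n` on rational functions, permuting the variables. -/
def sAct {n : ℕ} (w : Equiv.Perm (Fin n)) : KK n →+* KK n :=
  IsFractionRing.lift
    (g := (algebraMap (MvPolynomial (Fin n) (RatFunc ℚ)) (KK n)).comp
      (rename (w : Fin n → Fin n) :
        MvPolynomial (Fin n) (RatFunc ℚ) →ₐ[RatFunc ℚ] MvPolynomial (Fin n) (RatFunc ℚ)).toRingHom)
    (by
      intro a b hab
      exact rename_injective (w : Fin n → Fin n) w.injective
        (IsFractionRing.injective (MvPolynomial (Fin n) (RatFunc ℚ)) (KK n) (by simpa using hab)))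

/-- The operator `T_i` (acting in the variables `x_i, x_j` with `j = i+1`):
`T_i f = -t^{-1/2} f + (1 + s_i)( ((t^{-1/2} - t^{1/2} x_i^{-1} x_{i+1})/(1 - x_i^{-1} x_{i+1})) f )`. -/
def heckeT {n : ℕ} (i j : Fin n) : KK n → KK n := fun f =>
  -(tHalf n)⁻¹ * f
    + ((tHalf n)⁻¹ - tHalf n * (xv i)⁻¹ * xv j) / (1 - (xv i)⁻¹ * xv j) * f
    + sAct (Equiv.swap i j)
        (((tHalf n)⁻¹ - tHalf n * (xv i)⁻¹ * xv j) / (1 - (xv i)⁻¹ * xv j) * f)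

/-!
Write `c(x, y) = (t^{-1/2} - t^{1/2} x⁻¹ y) / (1 - x⁻¹ y)`, so that
`T_i f = (c(x_i, x_{i+1}) - t^{-1/2}) f + c(x_{i+1}, x_i) s_i f`. The quadratic relation comes
from `c(x, y) + c(y, x) = t^{1/2} + t^{-1/2}`. Expanding both sides of the braid relation over
the six elements `w f`, `w ∈ ⟨s_i, s_{i+1}⟩`, the coefficients of the difference are all
multiples of a single rational function of `c(x, y)`, `c(y, z)`, `c(x, z)`, which vanishes
identically. Operators with disjoint pairs of variables commute because each one's coefficients
are fixed by the other's transposition. Only the facts that the `s_i` are ring automorphisms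
fixing `t^{1/2}` and satisfying the Coxeter relations of `S_n` enter, so the argument works over
any field with such automorphisms.
-/

namespace DemazureLusztig

variable {F : Type*} [Field F]

def coeff (a x y : F) : F := (a⁻¹ - a * x⁻¹ * y) / (1 - x⁻¹ * y)

/-- `op σ a x y` is `T_i` with `a = t^{1/2}`, `(x, y) = (x_i, x_{i+1})` and `σ = s_i`. -/
def op (σ : F →+* F) (a x y f : F) : F := -a⁻¹ * f + coeff a x y * f + σ (coeff a x y * f)

lemma map_coeff (σ : F →+* F) (a x y : F) : σ (coeff a x y) = coeff (σ a) (σ x) (σ y) := by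
  simp [coeff]

variable {a x y z : F}

lemma coeff_add_coeff_swap (ha : a ≠ 0) (hx : x ≠ 0) (hy : y ≠ 0) (hxy : x ≠ y) :
    coeff a x y + coeff a y x = a + a⁻¹ := by
  have : x - y ≠ 0 := sub_ne_zero.mpr hxy
  have : y - x ≠ 0 := sub_ne_zero.mpr hxy.symm
  simp only [coeff]
  field_simp
  ring

lemma coeff_braid_identity (ha : a ≠ 0) (hx : x ≠ 0) (hy : y ≠ 0)
    (hxy : x ≠ y) (hyz : y ≠ z) (hxz : x ≠ z) :
    (coeff a x y - a⁻¹) * (coeff a y z - a⁻¹)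
      + (coeff a x z - a⁻¹) * (a + a⁻¹ - coeff a x y - coeff a y z) = 0 := by
  have : x - y ≠ 0 := sub_ne_zero.mpr hxy
  have : y - x ≠ 0 := sub_ne_zero.mpr hxy.symm
  have : y - z ≠ 0 := sub_ne_zero.mpr hyz
  have : x - z ≠ 0 := sub_ne_zero.mpr hxz
  simp only [coeff]
  field_simp
  ring

variable {σ τ : F →+* F}

lemma op_op (ha : a ≠ 0) (hx : x ≠ 0) (hxy : x ≠ y)
    (hσ : Function.Involutive σ) (hσa : σ a = a) (hσx : σ x = y) (hσy : σ y = x) (f : F) :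
    op σ a x y (op σ a x y f) = (a - a⁻¹) * op σ a x y f + f := by
  have hy : y ≠ 0 := hσx ▸ (map_ne_zero σ).mpr hx
  have hsum := coeff_add_coeff_swap ha hx hy hxy
  simp only [op, map_add, map_mul, map_neg, map_inv₀, map_coeff, hσa, hσx, hσy, hσ _]
  linear_combination (coeff a x y * f + coeff a y x * σ f) * hsum + f * mul_inv_cancel₀ ha

lemma op_braid (ha : a ≠ 0) (hx : x ≠ 0) (hxy : x ≠ y)
    (hσ : Function.Involutive σ) (hτ : Function.Involutive τ)
    (hστ : ∀ g, σ (τ (σ g)) = τ (σ (τ g)))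
    (hσa : σ a = a) (hσx : σ x = y) (hσy : σ y = x) (hσz : σ z = z)
    (hτa : τ a = a) (hτx : τ x = x) (hτy : τ y = z) (hτz : τ z = y) (f : F) :
    op σ a x y (op τ a y z (op σ a x y f)) = op τ a y z (op σ a x y (op τ a y z f)) := by
  have hy : y ≠ 0 := hσx ▸ (map_ne_zero σ).mpr hx
  have hz : z ≠ 0 := hτy ▸ (map_ne_zero τ).mpr hy
  have hxz : x ≠ z := hτx ▸ hτy ▸ τ.injective.ne hxy
  have hyz : y ≠ z := hσx ▸ hσz ▸ σ.injective.ne hxz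
  have hyx : coeff a y x = a + a⁻¹ - coeff a x y := by
    linear_combination coeff_add_coeff_swap ha hx hy hxy
  have hzy : coeff a z y = a + a⁻¹ - coeff a y z := by
    linear_combination coeff_add_coeff_swap ha hy hz hyz
  simp only [op, map_add, map_mul, map_neg, map_inv₀, map_coeff, hσa, hσx, hσy, hσz, hτa, hτx,
    hτy, hτz, hσ _, hτ _, hστ]
  rw [hyx, hzy]
  linear_combination ((coeff a x y - coeff a y z) * f + (a + a⁻¹ - coeff a x y) * σ f
    - (a + a⁻¹ - coeff a y z) * τ f) * coeff_braid_identity ha hx hy hxy hyz hxz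

lemma op_comm {w v : F} (hστ : ∀ g, σ (τ g) = τ (σ g))
    (hσa : σ a = a) (hσx : σ x = y) (hσy : σ y = x) (hσw : σ w = w) (hσv : σ v = v)
    (hτa : τ a = a) (hτx : τ x = x) (hτy : τ y = y) (hτw : τ w = v) (hτv : τ v = w) (f : F) :
    op σ a x y (op τ a w v f) = op τ a w v (op σ a x y f) := by
  simp only [op, map_add, map_mul, map_neg, map_inv₀, map_coeff, hσa, hσx, hσy, hσw, hσv, hτa,
    hτx, hτy, hτw, hτv, hστ]
  ring

end DemazureLusztig

section Permutations

open Equiv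

lemma Equiv.swap_mul_swap_mul_swap_braid {α : Type*} [DecidableEq α] {i j k : α}
    (hij : i ≠ j) (hjk : j ≠ k) (hik : i ≠ k) :
    swap i j * swap j k * swap i j = swap j k * swap i j * swap j k := by
  rw [swap_mul_swap_mul_swap hij hik, swap_comm i j, swap_comm j k,
    swap_mul_swap_mul_swap hjk.symm hik.symm, swap_comm]

lemma Equiv.swap_mul_swap_comm_of_ne {α : Type*} [DecidableEq α] {i j k l : α}
    (hik : i ≠ k) (hil : i ≠ l) (hjk : j ≠ k) (hjl : j ≠ l) :
    swap i j * swap k l = swap k l * swap i j := by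
  have hconj := swap_apply_apply (swap k l) i j
  rw [swap_apply_of_ne_of_ne hik hil, swap_apply_of_ne_of_ne hjk hjl, swap_inv] at hconj
  calc swap i j * swap k l = swap k l * swap i j * swap k l * swap k l := by rw [← hconj]
    _ = swap k l * swap i j := by rw [mul_assoc, swap_mul_self, mul_one]

end Permutations

section HeckeOperators

open DemazureLusztig Equiv

variable {n : ℕ}

lemma sAct_algebraMap (w : Perm (Fin n)) (p : MvPolynomial (Fin n) (RatFunc ℚ)) :
    sAct w (algebraMap _ (KK n) p) = algebraMap _ (KK n) (rename w p) :=
  IsFractionRing.lift_algebraMap _ _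

lemma sAct_tHalf (w : Perm (Fin n)) : sAct w (tHalf n) = tHalf n := by
  rw [tHalf, sAct_algebraMap, rename_C]

lemma sAct_xv (w : Perm (Fin n)) (i : Fin n) : sAct w (xv i) = xv (w i) := by
  rw [xv, sAct_algebraMap, rename_X, xv]

lemma sAct_swap_xv_left (i j : Fin n) : sAct (swap i j) (xv i) = xv j := by
  rw [sAct_xv, swap_apply_left]

lemma sAct_swap_xv_right (i j : Fin n) : sAct (swap i j) (xv j) = xv i := by
  rw [sAct_xv, swap_apply_right]

lemma sAct_swap_xv_of_ne {i j k : Fin n} (hki : k ≠ i) (hkj : k ≠ j) :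
    sAct (swap i j) (xv k) = xv k := by
  rw [sAct_xv, swap_apply_of_ne_of_ne hki hkj]

lemma sAct_sAct (w v : Perm (Fin n)) (f : KK n) : sAct w (sAct v f) = sAct (w * v) f := by
  suffices (sAct w).comp (sAct v) = sAct (w * v) from DFunLike.congr_fun this f
  refine IsLocalization.ringHom_ext (nonZeroDivisors (MvPolynomial (Fin n) (RatFunc ℚ)))
    (RingHom.ext fun p => ?_)
  simp [sAct_algebraMap, rename_rename]

lemma sAct_one (f : KK n) : sAct 1 f = f := by
  suffices sAct (1 : Perm (Fin n)) = RingHom.id (KK n) from DFunLike.congr_fun this f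
  refine IsLocalization.ringHom_ext (nonZeroDivisors (MvPolynomial (Fin n) (RatFunc ℚ)))
    (RingHom.ext fun p => ?_)
  simp [sAct_algebraMap]

lemma sAct_swap_involutive (i j : Fin n) : Function.Involutive (sAct (swap i j)) :=
  fun f => by rw [sAct_sAct, swap_mul_self, sAct_one]

lemma tHalf_ne_zero : tHalf n ≠ 0 :=
  (map_ne_zero_iff _ (IsFractionRing.injective _ (KK n))).mpr (C_ne_zero.mpr RatFunc.X_ne_zero)

lemma xv_ne_zero (i : Fin n) : xv i ≠ 0 :=
  (map_ne_zero_iff _ (IsFractionRing.injective _ (KK n))).mpr (X_ne_zero i)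

lemma xv_injective : Function.Injective (xv (n := n)) :=
  (IsFractionRing.injective _ (KK n)).comp X_injective

lemma heckeT_heckeT {i j : Fin n} (hij : i ≠ j) (f : KK n) :
    heckeT i j (heckeT i j f) = (tHalf n - (tHalf n)⁻¹) * heckeT i j f + f :=
  op_op tHalf_ne_zero (xv_ne_zero i) (xv_injective.ne hij) (sAct_swap_involutive i j)
    (sAct_tHalf _) (sAct_swap_xv_left i j) (sAct_swap_xv_right i j) f

lemma heckeT_braid {i j k : Fin n} (hij : i ≠ j) (hjk : j ≠ k) (hik : i ≠ k) (f : KK n) :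
    heckeT i j (heckeT j k (heckeT i j f)) = heckeT j k (heckeT i j (heckeT j k f)) :=
  op_braid tHalf_ne_zero (xv_ne_zero i) (xv_injective.ne hij)
    (sAct_swap_involutive i j) (sAct_swap_involutive j k)
    (fun g => by simp only [sAct_sAct, ← mul_assoc, swap_mul_swap_mul_swap_braid hij hjk hik])
    (sAct_tHalf _) (sAct_swap_xv_left i j) (sAct_swap_xv_right i j)
    (sAct_swap_xv_of_ne hik.symm hjk.symm)
    (sAct_tHalf _) (sAct_swap_xv_of_ne hij hik) (sAct_swap_xv_left j k) (sAct_swap_xv_right j k) f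

lemma heckeT_comm {i j k l : Fin n} (hik : i ≠ k) (hil : i ≠ l) (hjk : j ≠ k) (hjl : j ≠ l)
    (f : KK n) : heckeT i j (heckeT k l f) = heckeT k l (heckeT i j f) :=
  op_comm (fun g => by rw [sAct_sAct, sAct_sAct, swap_mul_swap_comm_of_ne hik hil hjk hjl])
    (sAct_tHalf _) (sAct_swap_xv_left i j) (sAct_swap_xv_right i j)
    (sAct_swap_xv_of_ne hik.symm hjk.symm) (sAct_swap_xv_of_ne hil.symm hjl.symm)
    (sAct_tHalf _) (sAct_swap_xv_of_ne hik hil) (sAct_swap_xv_of_ne hjk hjl)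
    (sAct_swap_xv_left k l) (sAct_swap_xv_right k l) f

end HeckeOperators

/-- The operators `T_1, …, T_{n-1}` satisfy the Hecke algebra relations:
the quadratic relation `T_i² = (t^{1/2} - t^{-1/2}) T_i + 1`, the braid relations,
and commutation `T_i T_j = T_j T_i` for `|i-j| ≥ 2`. -/
theorem hecke_relations_for_demazure_lusztig_operators (n : ℕ) :
    (∀ i j : Fin n, (i : ℕ) + 1 = (j : ℕ) → ∀ f : KK n,
      heckeT i j (heckeT i j f) = (tHalf n - (tHalf n)⁻¹) * heckeT i j f + f)
    ∧ (∀ i j k : Fin n, (i : ℕ) + 1 = (j : ℕ) → (j : ℕ) + 1 = (k : ℕ) → ∀ f : KK n,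
      heckeT i j (heckeT j k (heckeT i j f)) = heckeT j k (heckeT i j (heckeT j k f)))
    ∧ (∀ i j k l : Fin n, (i : ℕ) + 1 = (j : ℕ) → (k : ℕ) + 1 = (l : ℕ) → j < k →
      ∀ f : KK n, heckeT i j (heckeT k l f) = heckeT k l (heckeT i j f)) := by
  refine ⟨fun i j hij f => heckeT_heckeT (Fin.ne_of_val_ne (by omega)) f,
    fun i j k hij hjk f => ?_, fun i j k l hij hkl hjk f => ?_⟩
  · exact heckeT_braid (Fin.ne_of_val_ne (by omega)) (Fin.ne_of_val_ne (by omega))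
      (Fin.ne_of_val_ne (by omega)) f
  · exact heckeT_comm (Fin.ne_of_val_ne (by omega)) (Fin.ne_of_val_ne (by omega)) hjk.ne
      (Fin.ne_of_val_ne (by omega)) f

end
end
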